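/- Let M ⊆ M₀ be a finite, nonempty, simple and bound set with M̃ ≠ ∅. Then there exists a connected component K of {x : U(x) ≤ Θ(M, M̃)} such that M ⊆ K and K ∩ M̃ ≠ ∅; moreover at least two distinct connected components of {x : U(x) < Θ(M, M̃)} intersect K. -/

import Mathlib

open Set Filter Metric
open scoped RealInnerProductSpace

noncomputable section

/-- Euclidean space `ℝ^d`. -/
abbrev Eucl (d : ℕ) : Type := EuclideanSpace ℝ (Fin d)

/-- The communication height `Θ(x, y)` between two points. -/
def commHeight {d : ℕ} (U : Eucl d → ℝ) (x y : Eucl d) : ℝ :=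
  ⨅ γ : Path x y, ⨆ t : unitInterval, U (γ t)

/-- The communication height `Θ(A, B)` between two sets, `+∞` if one is empty. -/
def commHeightSet {d : ℕ} (U : Eucl d → ℝ) (A B : Set (Eucl d)) : EReal :=
  ⨅ x ∈ A, ⨅ y ∈ B, (commHeight U x y : EReal)

/-- `M̃`: the local minima of `U` outside `M` of height at most `c = U(M)`. -/
def tildeSet {d : ℕ} (U : Eucl d → ℝ) (M : Set (Eucl d)) (c : ℝ) : Set (Eucl d) :=
  {m' | IsLocalMin U m' ∧ m' ∉ M ∧ U m' ≤ c}

/-- `Ξ(M) = Θ(M, M̃) − U(M) ∈ (0, ∞]`. -/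
def XiSet {d : ℕ} (U : Eucl d → ℝ) (M : Set (Eucl d)) (c : ℝ) : EReal :=
  commHeightSet U M (tildeSet U M c) - (c : EReal)

/-- `M` (simple, common value `c`) is bound. -/
def IsBound {d : ℕ} (U : Eucl d → ℝ) (M : Set (Eucl d)) (c : ℝ) : Prop :=
  (∃ m, M = {m}) ∨
    ∀ m ∈ M, ∀ m' ∈ M, (commHeight U m m' : EReal) < commHeightSet U M (tildeSet U M c)

/-- `A` is a connected component of `S`. -/
def IsCompOf {d : ℕ} (S A : Set (Eucl d)) : Prop :=
  ∃ x ∈ S, A = connectedComponentIn S x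

/-- The Hessian matrix of `U` at `x`. -/
def hessMat {d : ℕ} (U : Eucl d → ℝ) (x : Eucl d) : Matrix (Fin d) (Fin d) ℝ :=
  Matrix.of fun i j =>
    iteratedFDeriv ℝ 2 U x ![EuclideanSpace.single i (1 : ℝ), EuclideanSpace.single j (1 : ℝ)]

/-- `σ` is a saddle point of `U`. -/
def IsSaddle {d : ℕ} (U : Eucl d → ℝ) (σ : Eucl d) : Prop :=
  gradient U σ = 0 ∧
    ∃ hH : (hessMat U σ).IsHermitian,
      IsUnit (hessMat U σ).det ∧ ∃! i, hH.eigenvalues i < 0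

/-- `x ↷ y` : heteroclinic orbit of `ẋ = b(x)` from `x` to `y`. -/
def Hetero {d : ℕ} (b : Eucl d → Eucl d) (x y : Eucl d) : Prop :=
  ∃ φ : ℝ → Eucl d,
    (∀ t, HasDerivAt φ (b (φ t)) t) ∧
      Tendsto φ atBot (nhds x) ∧ Tendsto φ atTop (nhds y)

/-- `σ ↝ m`. -/
def ConnectsTo {d : ℕ} (U : Eucl d → ℝ) (b : Eucl d → Eucl d) (σ m : Eucl d) : Prop :=
  Hetero b σ m ∨
    ∃ (k : ℕ) (_ : 0 < k) (σs : Fin k → Eucl d) (ms : Fin (k + 1) → Eucl d),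
      (∀ i, IsSaddle U (σs i)) ∧ (∀ i, U (σs i) < U σ) ∧
        (∀ i : Fin k, IsLocalMin U (ms i.castSucc)) ∧
        ms (Fin.last k) = m ∧ Hetero b σ (ms 0) ∧
        ∀ i : Fin k, Hetero b (σs i) (ms i.castSucc) ∧ Hetero b (σs i) (ms i.succ)

/-- `σ ↝ M`. -/
def ConnectsToSet {d : ℕ} (U : Eucl d → ℝ) (b : Eucl d → Eucl d) (σ : Eucl d)
    (M : Set (Eucl d)) : Prop :=
  ∃ m ∈ M, ConnectsTo U b σ m

/-- `σ ↷ M`. -/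
def HeteroToSet {d : ℕ} (b : Eucl d → Eucl d) (σ : Eucl d) (M : Set (Eucl d)) : Prop :=
  ∃ m ∈ M, Hetero b σ m

/-- `M →_σ M'`. -/
def AdjacentVia {d : ℕ} (U : Eucl d → ℝ) (b : Eucl d → Eucl d) (M M' : Set (Eucl d))
    (c : ℝ) (σ : Eucl d) : Prop :=
  IsSaddle U σ ∧ ConnectsToSet U b σ M ∧ HeteroToSet b σ M' ∧
    (U σ : EReal) = commHeightSet U M (tildeSet U M c) ∧
    (U σ : EReal) = commHeightSet U M M'

/-- Unstable-manifold property. -/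
def UnstableManifoldProperty {d : ℕ} (U : Eucl d → ℝ) (b : Eucl d → Eucl d) : Prop :=
  ∀ σ : Eucl d, IsSaddle U σ →
    ∃ r' > (0 : ℝ), ∃ Ap Am : Set (Eucl d),
      Ap ≠ Am ∧
      IsCompOf (ball σ r' ∩ {x | U x < U σ}) Ap ∧
      IsCompOf (ball σ r' ∩ {x | U x < U σ}) Am ∧
      (∀ C, IsCompOf (ball σ r' ∩ {x | U x < U σ}) C → C = Ap ∨ C = Am) ∧
      ∃ mp mm : Eucl d, IsLocalMin U mp ∧ IsLocalMin U mm ∧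
        ∃ tp tm : ℝ, ∃ φp φm : ℝ → Eucl d,
          (∀ t, HasDerivAt φp (b (φp t)) t) ∧ (∀ t, HasDerivAt φm (b (φm t)) t) ∧
          Tendsto φp atBot (nhds σ) ∧ Tendsto φp atTop (nhds mp) ∧
          Tendsto φm atBot (nhds σ) ∧ Tendsto φm atTop (nhds mm) ∧
          φp '' Iic tp ⊆ Ap ∧ φm '' Iic tm ⊆ Am

/-!
Choose `m ∈ M` and `m' ∈ M̃` realising `θ = Θ(M, M̃)`; both sets are finite. Critical points are
isolated, so `m` is a strict local minimum and every path from `m` to `m'` must cross a small sphere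
around `m` on which `U > U(M)`; hence `U(M) < θ`. The component `K` of `{U ≤ θ}` through `m`
contains `M` because `M` is bound, and it contains `m'`: `{U ≤ θ}` is compact, so a separation of
`m` from `m'` in it extends to disjoint open sets covering `{U < θ'}` for some `θ' > θ`, which a
path from `m` to `m'` of height `< θ'` cannot cross. Finally, components of the open set
`{U < θ}` are path connected, so `m` and `m'` lie in different ones since `Θ(m, m') = θ`.
-/

open Topology

section Topology

variable {X : Type*} [TopologicalSpace X]

theorem isCompact_sublevel_of_tendsto_cocompact {f : X → ℝ} (hf : Continuous f)
    (hcoer : Tendsto f (cocompact X) atTop) (b : ℝ) : IsCompact {x | f x ≤ b} := by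
  obtain ⟨K, hK, hKf⟩ := mem_cocompact.mp (hcoer (Ioi_mem_atTop b))
  refine hK.of_isClosed_subset (isClosed_le hf continuous_const) fun x hx => ?_
  by_contra hxK
  exact not_lt.2 hx (show b < f x from hKf hxK)

theorem exists_sublevel_lt_subset_of_isOpen {f : X → ℝ} (hf : Continuous f)
    (hcoer : Tendsto f (cocompact X) atTop) {O : Set X} (hO : IsOpen O) {θ : ℝ}
    (hθO : {x | f x ≤ θ} ⊆ O) : ∃ θ' > θ, {x | f x < θ'} ⊆ O := by
  obtain ⟨a, hθa, ha⟩ := ((isCompact_sublevel_of_tendsto_cocompact hf hcoer (θ + 1)).diff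
    hO).exists_forall_le' hf.continuousOn fun z hz => lt_of_not_ge fun h => hz.2 (hθO h)
  refine ⟨min a (θ + 1), lt_min hθa (lt_add_one θ), fun x hx => ?_⟩
  by_contra hxO
  have hxa : f x < min a (θ + 1) := hx
  have hax : a ≤ f x := ha x ⟨(hxa.trans_le (min_le_right _ _)).le, hxO⟩
  exact (hxa.trans_le (min_le_left _ _)).not_ge hax

theorem exists_isOpen_separating_of_notMem_connectedComponentIn [T2Space X] {S : Set X}
    {x y : X} (hS : IsCompact S) (hx : x ∈ S) (hy : y ∈ S)
    (hxy : y ∉ connectedComponentIn S x) :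
    ∃ u v : Set X, IsOpen u ∧ IsOpen v ∧ Disjoint u v ∧ S ⊆ u ∪ v ∧ x ∈ u ∧ y ∈ v := by
  have : CompactSpace S := isCompact_iff_compactSpace.mp hS
  have hsep : (⟨y, hy⟩ : S) ∉ connectedComponent (⟨x, hx⟩ : S) := fun h =>
    hxy (connectedComponentIn_eq_image hx ▸ mem_image_of_mem _ h)
  rw [connectedComponent_eq_iInter_isClopen, mem_iInter] at hsep
  push Not at hsep
  obtain ⟨⟨Z, hZ, hxZ⟩, hyZ⟩ := hsep
  obtain ⟨u, v, hu, hv, hZu, hZv, huv⟩ := SeparatedNhds.of_isCompact_isCompact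
    (hZ.isClosed.isCompact.image continuous_subtype_val)
    (hZ.compl.isClosed.isCompact.image continuous_subtype_val)
    ((disjoint_image_iff Subtype.val_injective).mpr disjoint_compl_right)
  refine ⟨u, v, hu, hv, huv, fun z hz => ?_, hZu ⟨_, hxZ, rfl⟩, hZv ⟨_, hyZ, rfl⟩⟩
  by_cases hzZ : (⟨z, hz⟩ : S) ∈ Z
  · exact Or.inl (hZu ⟨_, hzZ, rfl⟩)
  · exact Or.inr (hZv ⟨_, hzZ, rfl⟩)

end Topology

theorem Path.exists_mem_sphere {X : Type*} [PseudoMetricSpace X] {x y : X} (γ : Path x y)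
    {r : ℝ} (hr : 0 ≤ r) (hy : r ≤ dist y x) : ∃ t, γ t ∈ sphere x r :=
  intermediate_value_univ 0 1 (γ.continuous.dist continuous_const)
    ⟨by simpa using hr, by simpa using hy⟩

section Gradient

variable {F : Type*} [NormedAddCommGroup F] [InnerProductSpace ℝ F] [CompleteSpace F]
  {f : F → ℝ} {a : F}

theorem IsLocalMin.gradient_eq_zero (h : IsLocalMin f a) : gradient f a = 0 := by
  simp [gradient, h.fderiv_eq_zero]

theorem IsLocalMin.eventually_lt_of_eventually_gradient_ne (h : IsLocalMin f a)
    (hcrit : ∀ᶠ z in 𝓝[≠] a, gradient f z ≠ 0) : ∀ᶠ z in 𝓝[≠] a, f a < f z := by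
  have hnear : ∀ᶠ z in 𝓝[≠] a, ∀ᶠ w in 𝓝 z, f a ≤ f w :=
    nhdsWithin_le_nhds (eventually_eventually_nhds.mpr h)
  filter_upwards [hcrit, hnear] with z hz hzw
  -- a nearby point at the height of `a` would itself be a local minimum, hence critical
  refine lt_of_le_of_ne hzw.self_of_nhds fun heq => hz ?_
  exact IsLocalMin.gradient_eq_zero (hzw.mono fun w hw => heq ▸ hw)

end Gradient

section CommHeight

variable {d : ℕ} {U : Eucl d → ℝ} {x y : Eucl d}

theorem le_iSup_comp_path (hU : Continuous U) (γ : Path x y) (t : unitInterval) :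
    U (γ t) ≤ ⨆ s, U (γ s) :=
  le_ciSup (isCompact_range (hU.comp γ.continuous)).bddAbove t

theorem commHeight_le_iSup (hU : Continuous U) (γ : Path x y) :
    commHeight U x y ≤ ⨆ t, U (γ t) :=
  ciInf_le ⟨U x, forall_mem_range.2 fun γ' => by simpa using le_iSup_comp_path hU γ' 0⟩ γ

theorem le_commHeight (hU : Continuous U) {a : ℝ} (h : ∀ γ : Path x y, ∃ t, a ≤ U (γ t)) :
    a ≤ commHeight U x y := by
  have : Nonempty (Path x y) := ⟨PathConnectedSpace.somePath x y⟩
  refine le_ciInf fun γ => ?_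
  obtain ⟨t, ht⟩ := h γ
  exact ht.trans (le_iSup_comp_path hU γ t)

theorem exists_path_lt_of_commHeight_lt (hU : Continuous U) {a : ℝ} (h : commHeight U x y < a) :
    ∃ γ : Path x y, ∀ t, U (γ t) < a := by
  have : Nonempty (Path x y) := ⟨PathConnectedSpace.somePath x y⟩
  obtain ⟨γ, hγ⟩ := exists_lt_of_ciInf_lt h
  exact ⟨γ, fun t => (le_iSup_comp_path hU γ t).trans_lt hγ⟩

theorem commHeight_lt_of_forall_lt (hU : Continuous U) {a : ℝ} (γ : Path x y)
    (h : ∀ t, U (γ t) < a) : commHeight U x y < a := by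
  obtain ⟨t, -, ht⟩ :=
    isCompact_univ.exists_isMaxOn univ_nonempty (hU.comp γ.continuous).continuousOn
  calc commHeight U x y ≤ ⨆ s, U (γ s) := commHeight_le_iSup hU γ
    _ ≤ U (γ t) := ciSup_le fun s => ht (mem_univ s)
    _ < a := h t

variable (U) in
theorem exists_commHeightSet_eq {A B : Set (Eucl d)} (hA : A.Finite) (hA' : A.Nonempty)
    (hB : B.Finite) (hB' : B.Nonempty) :
    ∃ a ∈ A, ∃ b ∈ B, commHeightSet U A B = commHeight U a b := by
  obtain ⟨⟨a, b⟩, ⟨ha, hb⟩, hmin⟩ :=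
    (A ×ˢ B).exists_min_image (fun p => commHeight U p.1 p.2) (hA.prod hB) (hA'.prod hB')
  refine ⟨a, ha, b, hb, le_antisymm (iInf₂_le_of_le a ha (iInf₂_le b hb))
    (le_iInf₂ fun a' ha' => le_iInf₂ fun b' hb' => ?_)⟩
  exact_mod_cast hmin (a', b') ⟨ha', hb'⟩

theorem lt_commHeight_of_lt_on_sphere (hU : Continuous U) {r : ℝ} (hr : 0 ≤ r)
    (hy : r ≤ dist y x) (hsphere : ∀ z ∈ sphere x r, U x < U z) : U x < commHeight U x y := by
  obtain ⟨t₀, ht₀⟩ := (PathConnectedSpace.somePath x y).exists_mem_sphere hr hy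
  obtain ⟨z, hz, hmin⟩ := (isCompact_sphere x r).exists_isMinOn ⟨_, ht₀⟩ hU.continuousOn
  refine (hsphere z hz).trans_le (le_commHeight hU fun γ => ?_)
  obtain ⟨t, ht⟩ := γ.exists_mem_sphere hr hy
  exact ⟨t, hmin ht⟩

theorem lt_commHeight_of_eventually_lt (hU : Continuous U) (hx : ∀ᶠ z in 𝓝[≠] x, U x < U z)
    (hyx : U y ≤ U x) (hne : y ≠ x) : U x < commHeight U x y := by
  obtain ⟨ε, hε, hball⟩ := Metric.eventually_nhds_iff.mp (eventually_nhdsWithin_iff.mp hx)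
  have hy : ε ≤ dist y x := not_lt.mp fun h => (hball h hne).not_ge hyx
  refine lt_commHeight_of_lt_on_sphere hU (half_pos hε).le (by linarith) fun z hz => hball ?_
    (ne_of_mem_sphere hz (half_pos hε).ne')
  rw [mem_sphere.mp hz]
  linarith

theorem commHeight_lt_of_mem_connectedComponentIn (hU : Continuous U) {a : ℝ}
    (h : y ∈ connectedComponentIn {z | U z < a} x) : commHeight U x y < a := by
  have hx : x ∈ {z | U z < a} := connectedComponentIn_nonempty_iff.mp ⟨y, h⟩
  have hpc : IsPathConnected (connectedComponentIn {z | U z < a} x) :=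
    (isOpen_lt hU continuous_const).connectedComponentIn.isConnected_iff_isPathConnected.mp
      (isConnected_connectedComponentIn_iff.mpr hx)
  obtain ⟨γ, hγ⟩ := hpc.joinedIn x (mem_connectedComponentIn hx) y h
  exact commHeight_lt_of_forall_lt hU γ fun t => connectedComponentIn_subset _ x (hγ t)

theorem mem_connectedComponentIn_of_commHeight_le (hU : Continuous U)
    (hcoer : Tendsto U (cocompact (Eucl d)) atTop) {θ : ℝ} (hx : U x ≤ θ) (hy : U y ≤ θ)
    (h : commHeight U x y ≤ θ) : y ∈ connectedComponentIn {z | U z ≤ θ} x := by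
  by_contra hxy
  obtain ⟨u, v, hu, hv, huv, hcover, hxu, hyv⟩ :=
    exists_isOpen_separating_of_notMem_connectedComponentIn
      (isCompact_sublevel_of_tendsto_cocompact hU hcoer θ) hx hy hxy
  obtain ⟨θ', hθ', hsub⟩ := exists_sublevel_lt_subset_of_isOpen hU hcoer (hu.union hv) hcover
  obtain ⟨γ, hγ⟩ := exists_path_lt_of_commHeight_lt hU (h.trans_lt hθ')
  obtain ⟨_, -, hwu, hwv⟩ := (isConnected_range γ.continuous).isPreconnected u v hu hv
    (range_subset_iff.2 fun t => hsub (hγ t)) ⟨x, ⟨0, γ.source⟩, hxu⟩ ⟨y, ⟨1, γ.target⟩, hyv⟩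
  exact huv.ne_of_mem hwu hwv rfl

end CommHeight

theorem statement13_general {d : ℕ}
    (U : Eucl d → ℝ) (hU : ContDiff ℝ (⊤ : ℕ∞) U)
    (hcoer : Tendsto U (cocompact (Eucl d)) atTop)
    (hcritfin : {x : Eucl d | gradient U x = 0}.Finite)
    (M : Set (Eucl d)) (hMfin : M.Finite) (hMne : M.Nonempty)
    (hMloc : ∀ m ∈ M, IsLocalMin U m)
    (c : ℝ) (hc : ∀ m ∈ M, U m = c) (hMbd : IsBound U M c)
    (htilde : (tildeSet U M c).Nonempty)
    (θ : ℝ) (hθ : (θ : EReal) = commHeightSet U M (tildeSet U M c)) :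
    ∃ K : Set (Eucl d), IsCompOf {x | U x ≤ θ} K ∧ M ⊆ K ∧
      (K ∩ tildeSet U M c).Nonempty ∧
      ∃ W W' : Set (Eucl d), IsCompOf {x | U x < θ} W ∧ IsCompOf {x | U x < θ} W' ∧
        W ≠ W' ∧ (W ∩ K).Nonempty ∧ (W' ∩ K).Nonempty := by
  have hUc : Continuous U := hU.continuous
  have htildefin : (tildeSet U M c).Finite :=
    hcritfin.subset fun z hz => hz.1.gradient_eq_zero
  obtain ⟨m, hm, m', hm', hθm⟩ := exists_commHeightSet_eq U hMfin hMne htildefin htilde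
  have hθ' : commHeight U m m' = θ := by exact_mod_cast (hθ.trans hθm).symm
  have hstrict : ∀ᶠ z in 𝓝[≠] m, U m < U z :=
    (hMloc m hm).eventually_lt_of_eventually_gradient_ne
      (nhdsNE_le_cofinite m hcritfin.eventually_cofinite_notMem)
  have hm'm : m' ≠ m := fun h => hm'.2.1 (h ▸ hm)
  have hcθ : c < θ := by
    have := lt_commHeight_of_eventually_lt hUc hstrict (hc m hm ▸ hm'.2.2) hm'm
    rwa [hc m hm, hθ'] at this
  have hMθ : ∀ n ∈ M, U n < θ := fun n hn => hc n hn ▸ hcθ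
  have hm'θ : U m' < θ := hm'.2.2.trans_lt hcθ
  set K := connectedComponentIn {x | U x ≤ θ} m
  have hMK : M ⊆ K := by
    intro n hn
    rcases hMbd with ⟨n₀, rfl⟩ | hbound
    · rw [mem_singleton_iff.mp hn, ← mem_singleton_iff.mp hm]
      exact mem_connectedComponentIn (hMθ m hm).le
    · have hlt : (commHeight U m n : EReal) < θ := hθ ▸ hbound m hm n hn
      exact mem_connectedComponentIn_of_commHeight_le hUc hcoer (hMθ m hm).le (hMθ n hn).le
        (by exact_mod_cast hlt.le)
  have hm'K : m' ∈ K :=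
    mem_connectedComponentIn_of_commHeight_le hUc hcoer (hMθ m hm).le hm'θ.le hθ'.le
  refine ⟨K, ⟨m, (hMθ m hm).le, rfl⟩, hMK, ⟨m', hm'K, hm'⟩,
    connectedComponentIn {x | U x < θ} m, connectedComponentIn {x | U x < θ} m',
    ⟨m, hMθ m hm, rfl⟩, ⟨m', hm'θ, rfl⟩, fun hW => ?_,
    ⟨m, mem_connectedComponentIn (hMθ m hm), hMK hm⟩, ⟨m', mem_connectedComponentIn hm'θ, hm'K⟩⟩
  have hm'W : m' ∈ connectedComponentIn {x | U x < θ} m := hW ▸ mem_connectedComponentIn hm'θ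
  exact (commHeight_lt_of_mem_connectedComponentIn hUc hm'W).ne hθ'

theorem statement13 {d : ℕ} (hd : 1 ≤ d)
    (U : Eucl d → ℝ) (hU : ContDiff ℝ (⊤ : ℕ∞) U)
    (hcoer : Tendsto U (cocompact (Eucl d)) atTop)
    (hcritfin : {x : Eucl d | gradient U x = 0}.Finite)
    (hmorse : ∀ x : Eucl d, gradient U x = 0 → IsUnit (hessMat U x).det)
    (M : Set (Eucl d)) (hMfin : M.Finite) (hMne : M.Nonempty)
    (hMloc : ∀ m ∈ M, IsLocalMin U m)
    (c : ℝ) (hc : ∀ m ∈ M, U m = c) (hMbd : IsBound U M c)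
    (htilde : (tildeSet U M c).Nonempty)
    (θ : ℝ) (hθ : (θ : EReal) = commHeightSet U M (tildeSet U M c)) :
    ∃ K : Set (Eucl d), IsCompOf {x | U x ≤ θ} K ∧ M ⊆ K ∧
      (K ∩ tildeSet U M c).Nonempty ∧
      ∃ W W' : Set (Eucl d), IsCompOf {x | U x < θ} W ∧ IsCompOf {x | U x < θ} W' ∧
        W ≠ W' ∧ (W ∩ K).Nonempty ∧ (W' ∩ K).Nonempty :=
  statement13_general U hU hcoer hcritfin M hMfin hMne hMloc c hc hMbd htilde θ hθ

end
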